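/- arXiv:1405.3218 — 2 statements merged into one kernel-verified Lean document; each statement's English description precedes it below -/
import Mathlib

section
/- Let L be a finite join-semilattice, R a commutative ring, f : L → R, and r ≥ 1 a natural number. Let f^{⊗r} denote the r-fold join-convolution power of f. Then for every a' ∈ L, f^{⊗r}(a') = (Σ_{a ≤ a'} f(a))^r − Σ_{a < a'} f^{⊗r}(a). (This is the identity underlying the correctness of the heterogeneous sum-out operator.) -/
open Finset

def joinConv {L R : Type*} [SemilatticeSup L] [Fintype L] [DecidableEq L]
    [CommSemiring R] (f g : L → R) (a : L) : R :=
  ∑ p ∈ univ.filter (fun p : L × L => p.1 ⊔ p.2 = a), f p.1 * g p.2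

/-- `joinConvPow f n` is the `(n+1)`-fold join-convolution power of `f`
(so `joinConvPow f 0 = f`, i.e. `f^{⊗1} = f`). -/
def joinConvPow {L R : Type*} [SemilatticeSup L] [Fintype L] [DecidableEq L]
    [CommSemiring R] (f : L → R) : ℕ → L → R
  | 0 => f
  | n + 1 => joinConv (joinConvPow f n) f

lemma sum_joinConvPow_le {L R : Type*} [SemilatticeSup L] [Fintype L]
    [DecidableEq L] [DecidableRel ((· ≤ ·) : L → L → Prop)] [CommRing R]
    (f : L → R) (n : ℕ) (a' : L) :
    ∑ a ∈ univ.filter (· ≤ a'), joinConvPow f n a =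
      (∑ a ∈ univ.filter (· ≤ a'), f a) ^ (n + 1) := by
  induction n with
  | zero => simp [joinConvPow]
  | succ n ih =>
    have : ∑ a ∈ univ.filter (· ≤ a'), joinConvPow f (n + 1) a =
        ∑ p ∈ univ.filter (fun p : L × L => p.1 ⊔ p.2 ≤ a'),
          joinConvPow f n p.1 * f p.2 := by
      rw [show (joinConvPow f (n+1)) = joinConv (joinConvPow f n) f from rfl]
      unfold joinConv
      rw [Finset.sum_fiberwise_eq_sum_filter]
      apply Finset.sum_congr _ (fun _ _ => rfl)
      ext p
      simp
    rw [this]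
    have hfilt : univ.filter (fun p : L × L => p.1 ⊔ p.2 ≤ a') =
        (univ.filter (· ≤ a')) ×ˢ (univ.filter (· ≤ a')) := by
      ext p
      simp [mem_product, sup_le_iff]
    rw [hfilt, Finset.sum_product, pow_succ]
    rw [← ih, Finset.sum_mul]
    apply Finset.sum_congr rfl
    intro a _
    rw [Finset.mul_sum]

/-- For every `r ≥ 1` (here `r = n + 1`):
`f^{⊗r}(a') = (∑_{a ≤ a'} f a)^r − ∑_{a < a'} f^{⊗r}(a)`. -/
theorem het_sum_out_identity {L R : Type*} [SemilatticeSup L] [Fintype L]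
    [DecidableEq L] [DecidableRel ((· ≤ ·) : L → L → Prop)]
    [DecidableRel ((· < ·) : L → L → Prop)] [CommRing R]
    (f : L → R) (n : ℕ) (a' : L) :
    joinConvPow f n a' =
      (∑ a ∈ univ.filter (· ≤ a'), f a) ^ (n + 1) -
        ∑ a ∈ univ.filter (· < a'), joinConvPow f n a := by
  have key := sum_joinConvPow_le f n a'
  have hsplit : univ.filter (· ≤ a') = insert a' (univ.filter (· < a')) := by
    ext a
    simp only [mem_filter, mem_univ, true_and, mem_insert]
    constructor
    · intro h
      rcases eq_or_lt_of_le h with h' | h'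
      · exact Or.inl h'
      · exact Or.inr h'
    · rintro (rfl | h)
      · exact le_refl _
      · exact le_of_lt h
  rw [hsplit, Finset.sum_insert (by simp)] at key
  rw [hsplit]
  linear_combination key
end

section
/- Let L be a finite join-semilattice, R a commutative semiring, f : L → R, r ≥ 1. Then the cumulative transform of the r-fold join-convolution power satisfies Σ_{a ≤ a'} f^{⊗r}(a) = (Σ_{a ≤ a'} f(a))^r for all a' ∈ L. -/
open Finset

lemma cum_joinConv {L R : Type*} [SemilatticeSup L] [Fintype L]
    [DecidableEq L] [DecidableRel ((· ≤ ·) : L → L → Prop)]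
    [CommSemiring R] (f g : L → R) (a' : L) :
    ∑ a ∈ univ.filter (· ≤ a'), joinConv f g a =
      (∑ a ∈ univ.filter (· ≤ a'), f a) * (∑ a ∈ univ.filter (· ≤ a'), g a) := by
  simp only [joinConv]
  rw [sum_fiberwise_eq_sum_filter univ (univ.filter (· ≤ a'))
    (fun p : L × L => p.1 ⊔ p.2) (fun p => f p.1 * g p.2)]
  have hset : (univ.filter fun p : L × L => p.1 ⊔ p.2 ∈ univ.filter (· ≤ a')) =
      (univ.filter (· ≤ a')) ×ˢ (univ.filter (· ≤ a')) := by
    ext p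
    simp [sup_le_iff]
  rw [hset, Finset.sum_mul_sum]
  rw [Finset.sum_product]

/-- For every `r ≥ 1` (here `r = n + 1`):
`∑_{a ≤ a'} f^{⊗r}(a) = (∑_{a ≤ a'} f a)^r`. -/
theorem cumulative_of_joinConvPow {L R : Type*} [SemilatticeSup L] [Fintype L]
    [DecidableEq L] [DecidableRel ((· ≤ ·) : L → L → Prop)]
    [CommSemiring R] (f : L → R) (n : ℕ) (a' : L) :
    ∑ a ∈ univ.filter (· ≤ a'), joinConvPow f n a =
      (∑ a ∈ univ.filter (· ≤ a'), f a) ^ (n + 1) := by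
  induction n with
  | zero => simp [joinConvPow]
  | succ n ih => rw [joinConvPow, cum_joinConv, ih, ← pow_succ]
end
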